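/- arXiv:1402.5701 — 3 statements merged into one kernel-verified Lean document; each statement's English description precedes it below -/
import Mathlib

section
/- Let n ≥ 3, 0 < α < n, and let w be a nonnegative measurable function on ℝⁿ. If there exists a finite constant C_w such that (∫_{ℝⁿ} |I_{α/2} f(x)|² w(x) dx)^{1/2} ≤ C_w (∫_{ℝⁿ} |f|² dx)^{1/2} for all measurable f : ℝⁿ → ℝ, then ‖w‖_α := sup_Q (∫_Q w dx)^{-1} ∫_Q ∫_Q w(x)w(y)/|x−y|^{n−α} dx dy < ∞, the supremum being over all dyadic cubes Q in ℝⁿ. -/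
open MeasureTheory Metric ENNReal Asymptotics

noncomputable section

/-- The dyadic cube `∏ᵢ [2^k mᵢ, 2^k (mᵢ+1))` in `ℝⁿ`. -/
def dyadicCube (n : ℕ) (k : ℤ) (m : Fin n → ℤ) : Set (EuclideanSpace ℝ (Fin n)) :=
  {x | ∀ i : Fin n, (2 : ℝ) ^ k * m i ≤ x i ∧ x i < (2 : ℝ) ^ k * (m i + 1)}

/-- The Kerman–Sawyer quantity
`‖w‖_α = sup_Q (∫_Q w)⁻¹ ∫_Q ∫_Q w(x) w(y) / |x-y|^{n-α} dx dy`,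
the supremum taken over all dyadic cubes `Q` of `ℝⁿ`. -/
def ksNorm (n : ℕ) (α : ℝ) (w : EuclideanSpace ℝ (Fin n) → ℝ) : ℝ≥0∞ :=
  ⨆ (k : ℤ) (m : Fin n → ℤ),
    (∫⁻ x in dyadicCube n k m, ENNReal.ofReal (w x))⁻¹ *
      ∫⁻ x in dyadicCube n k m, ∫⁻ y in dyadicCube n k m,
        ENNReal.ofReal (w x * w y / ‖x - y‖ ^ ((n : ℝ) - α))

namespace KS

variable {n : ℕ}

local notation "E" => EuclideanSpace ℝ (Fin n)

/-- The Riesz kernel `1/‖x-y‖^p` as an `ℝ≥0∞`-valued function. -/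
def ker (p : ℝ) (x y : EuclideanSpace ℝ (Fin n)) : ℝ≥0∞ := ENNReal.ofReal (1 / ‖x - y‖ ^ p)

lemma measurable_ker (p : ℝ) : Measurable (fun q : E × E => ker p q.1 q.2) := by
  apply ENNReal.measurable_ofReal.comp
  exact measurable_const.div (((measurable_fst.sub measurable_snd)).norm.pow_const p)

lemma measurable_ker' (p : ℝ) : Measurable (fun q : E × E => ker p q.2 q.1) := by
  apply ENNReal.measurable_ofReal.comp
  exact measurable_const.div (((measurable_snd.sub measurable_fst)).norm.pow_const p)

lemma measurable_ker_left (p : ℝ) (x : E) : Measurable (fun z : E => ker p x z) := by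
  apply ENNReal.measurable_ofReal.comp
  exact measurable_const.div (((measurable_const.sub measurable_id)).norm.pow_const p)

lemma measurable_ker_right (p : ℝ) (z : E) : Measurable (fun x : E => ker p x z) := by
  apply ENNReal.measurable_ofReal.comp
  exact measurable_const.div (((measurable_id.sub measurable_const)).norm.pow_const p)

lemma measurable_kerSnd (p : ℝ) (x : E) : Measurable (fun q : E × E => ker p x q.2) := by
  apply ENNReal.measurable_ofReal.comp
  exact measurable_const.div (((measurable_const.sub measurable_snd)).norm.pow_const p)

lemma ker_symm (p : ℝ) (x y : E) : ker p x y = ker p y x := by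
  unfold ker; rw [norm_sub_rev]

lemma measurable_coord (i : Fin n) : Measurable (fun x : E => x i) :=
  (EuclideanSpace.proj i).continuous.measurable

lemma measurableSet_dyadicCube (k : ℤ) (m : Fin n → ℤ) :
    MeasurableSet (dyadicCube n k m) := by
  have : dyadicCube n k m = ⋂ i : Fin n,
      {x : E | (2:ℝ)^k * m i ≤ x i} ∩ {x : E | x i < (2:ℝ)^k * (m i + 1)} := by
    ext x; simp [dyadicCube, Set.mem_iInter, forall_and]
  rw [this]
  refine MeasurableSet.iInter fun i => (MeasurableSet.inter ?_ ?_)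
  · exact measurableSet_le measurable_const (measurable_coord i)
  · exact measurableSet_lt (measurable_coord i) measurable_const

lemma measurable_F {a : EuclideanSpace ℝ (Fin n) → ℝ≥0∞} (ha : Measurable a)
    (Q : Set (EuclideanSpace ℝ (Fin n))) (p : ℝ) :
    Measurable fun z : E => ∫⁻ y in Q, a y * ker p y z := by
  apply Measurable.lintegral_prod_right (f := fun (z : E) (y : E) => a y * ker p y z)
  exact (ha.comp measurable_snd).mul (measurable_ker' p)

lemma ker_lower (hn : 0 < n) {α : ℝ} (hα : 0 < α) (hαn : α < n) (x y : E) (hxy : x ≠ y) :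
    ENNReal.ofReal ((2:ℝ) ^ (-((n:ℝ) - α/2))) * volume (ball (0:E) 1) *
        ENNReal.ofReal (1 / ‖x - y‖ ^ ((n:ℝ) - α))
      ≤ ∫⁻ z, ker ((n:ℝ) - α/2) x z * ker ((n:ℝ) - α/2) y z := by
  have hne : Nonempty (Fin n) := ⟨⟨0, hn⟩⟩
  haveI : Nontrivial (EuclideanSpace ℝ (Fin n)) :=
    nontrivial_of_ne (EuclideanSpace.single hne.some 1) 0 (by
      intro h
      have := congrFun (congrArg (fun v : EuclideanSpace ℝ (Fin n) => (v : Fin n → ℝ)) h) hne.some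
      simp at this)
  set p : ℝ := (n:ℝ) - α/2 with hp
  have hp0 : 0 < p := by
    have : α/2 < (n:ℝ) := by linarith
    simpa [hp] using sub_pos.mpr this
  set r : ℝ := ‖x - y‖ with hrdef
  have hr : 0 < r := by
    simpa [hrdef] using sub_ne_zero.mpr hxy
  set C : ℝ≥0∞ := ENNReal.ofReal (1/r^p) * ENNReal.ofReal (1/((2*r)^p)) with hC
  have hae : ∀ᵐ z ∂(volume.restrict (ball x r)), C ≤ ker p x z * ker p y z := by
    have h1 : ∀ᵐ z ∂(volume.restrict (ball x r)), z ∈ ball x r :=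
      ae_restrict_mem measurableSet_ball
    have h2 : ∀ᵐ z ∂(volume.restrict (ball x r)), z ≠ x := by
      refine ae_restrict_of_ae ?_
      have : volume ({x} : Set E) = 0 := measure_singleton x
      filter_upwards [measure_eq_zero_iff_ae_notMem.mp this] with z hz
      simpa using hz
    filter_upwards [h1, h2] with z hz hzx
    have hxz : 0 < ‖x - z‖ := by simpa using sub_ne_zero.mpr (Ne.symm hzx)
    have hxzr : ‖x - z‖ < r := by
      have := mem_ball.mp hz
      rwa [dist_eq_norm, norm_sub_rev] at this
    have hzy : z ≠ y := by
      rintro rfl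
      have := mem_ball.mp hz
      rw [dist_eq_norm, norm_sub_rev] at this
      exact lt_irrefl _ this
    have hyz : 0 < ‖y - z‖ := by simpa using sub_ne_zero.mpr (Ne.symm hzy)
    have hyzr : ‖y - z‖ < 2 * r := by
      calc ‖y - z‖ ≤ ‖y - x‖ + ‖x - z‖ := norm_sub_le_norm_sub_add_norm_sub y x z
        _ < r + r := by
            rw [norm_sub_rev]
            exact add_lt_add_of_le_of_lt le_rfl hxzr
        _ = 2 * r := by ring
    have e1 : (1:ℝ)/r^p ≤ 1/‖x - z‖^p := by
      apply one_div_le_one_div_of_le (Real.rpow_pos_of_pos hxz p)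
      exact Real.rpow_le_rpow hxz.le hxzr.le hp0.le
    have e2 : (1:ℝ)/(2*r)^p ≤ 1/‖y - z‖^p := by
      apply one_div_le_one_div_of_le (Real.rpow_pos_of_pos hyz p)
      exact Real.rpow_le_rpow hyz.le hyzr.le hp0.le
    exact mul_le_mul' (ENNReal.ofReal_le_ofReal e1) (ENNReal.ofReal_le_ofReal e2)
  calc ENNReal.ofReal ((2:ℝ) ^ (-p)) * volume (ball (0:E) 1) *
        ENNReal.ofReal (1 / r ^ ((n:ℝ) - α))
      = C * volume (ball x r) := by
        rw [Measure.addHaar_ball volume x hr.le, hC]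
        rw [← ENNReal.ofReal_mul (by positivity)]
        have hfr : Module.finrank ℝ (EuclideanSpace ℝ (Fin n)) = n := finrank_euclideanSpace_fin
        rw [hfr]
        have key : 1/r^p * (1/(2*r)^p) * r^(n:ℕ) = 2^(-p) * (1/r^((n:ℝ)-α)) := by
          have h2r : ((2*r):ℝ)^p = 2^p * r^p := Real.mul_rpow (by norm_num) hr.le
          have hrn : (r:ℝ) ^ (n:ℕ) = r ^ ((n:ℝ)) := (Real.rpow_natCast r n).symm
          rw [h2r, hrn, one_div, one_div, one_div, mul_inv, ← Real.rpow_neg hr.le,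
              ← Real.rpow_neg (by norm_num : (0:ℝ) ≤ 2), ← Real.rpow_neg hr.le]
          rw [show r ^ (-p) * ((2:ℝ) ^ (-p) * r ^ (-p)) * r ^ ((n:ℝ))
                = 2^(-p) * (r^(-p) * r^(-p) * r^((n:ℝ))) from by ring,
             ← Real.rpow_add hr, ← Real.rpow_add hr]
          congr 1
          rw [hp]; ring
        have this2 : ENNReal.ofReal ((2:ℝ) ^ (-p)) * ENNReal.ofReal (1 / r ^ ((n:ℝ) - α))
            = ENNReal.ofReal (r ^ n) * ENNReal.ofReal (1 / r ^ p * (1 / (2 * r) ^ p)) := by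
          rw [← ENNReal.ofReal_mul (by positivity), ← ENNReal.ofReal_mul (by positivity),
            mul_comm ((r:ℝ) ^ n), key]
        rw [mul_right_comm, this2]; ring
    _ ≤ ∫⁻ z in ball x r, ker p x z * ker p y z := by
        rw [← setLIntegral_const]
        exact lintegral_mono_ae hae
    _ ≤ ∫⁻ z, ker p x z * ker p y z := setLIntegral_le_lintegral _ _

lemma tonelli_square {a : EuclideanSpace ℝ (Fin n) → ℝ≥0∞} (ha : Measurable a)
    {Q : Set (EuclideanSpace ℝ (Fin n))} (hQ : MeasurableSet Q) (p : ℝ) :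
    ∫⁻ x in Q, ∫⁻ y in Q, a x * a y * ∫⁻ z, ker p x z * ker p y z
      = ∫⁻ z, (∫⁻ x in Q, a x * ker p x z) ^ 2 := by
  have hG : Measurable fun z : E => ∫⁻ x in Q, a x * ker p x z := measurable_F ha Q p
  set G := fun z : E => ∫⁻ x in Q, a x * ker p x z with hGdef
  calc ∫⁻ x in Q, ∫⁻ y in Q, a x * a y * ∫⁻ z, ker p x z * ker p y z
      = ∫⁻ x in Q, ∫⁻ y in Q, ∫⁻ z, (a x * ker p x z) * (a y * ker p y z) := by
        refine lintegral_congr fun x => lintegral_congr fun y => ?_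
        rw [← lintegral_const_mul _ (f := fun z => ker p x z * ker p y z) ((measurable_ker_left p x).mul (measurable_ker_left p y))]
        refine lintegral_congr fun z => ?_
        ring
    _ = ∫⁻ x in Q, ∫⁻ z, (a x * ker p x z) * G z := by
        refine lintegral_congr fun x => ?_
        rw [lintegral_lintegral_swap]
        · refine lintegral_congr fun z => ?_
          rw [hGdef, ← lintegral_const_mul _ (f := fun x => a x * ker p x z) (ha.mul (measurable_ker_right p z))]
        · apply Measurable.aemeasurable
          exact (measurable_const.mul (measurable_kerSnd p x)).mul
            ((ha.comp measurable_fst).mul (measurable_ker p))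
    _ = ∫⁻ z, ∫⁻ x in Q, (a x * ker p x z) * G z := by
        rw [lintegral_lintegral_swap]
        apply Measurable.aemeasurable
        exact (((ha.comp measurable_fst).mul (measurable_ker p))).mul (hG.comp measurable_snd)
    _ = ∫⁻ z, G z ^ 2 := by
        refine lintegral_congr fun z => ?_
        rw [lintegral_mul_const _ (f := fun x => a x * ker p x z) (ha.mul (measurable_ker_right p z)), sq]

lemma swap_phiF {a φ : EuclideanSpace ℝ (Fin n) → ℝ≥0∞} (ha : Measurable a) (hφ : Measurable φ)
    {Q : Set (EuclideanSpace ℝ (Fin n))} (hQ : MeasurableSet Q) (p : ℝ) :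
    ∫⁻ z, φ z * ∫⁻ y in Q, a y * ker p y z
      = ∫⁻ y in Q, a y * ∫⁻ z, φ z * ker p y z := by
  calc ∫⁻ z, φ z * ∫⁻ y in Q, a y * ker p y z
      = ∫⁻ z, ∫⁻ y in Q, φ z * (a y * ker p y z) := by
        refine lintegral_congr fun z => ?_
        rw [← lintegral_const_mul _ (f := fun y => a y * ker p y z) (ha.mul (measurable_ker_right p z))]
    _ = ∫⁻ y in Q, ∫⁻ z, φ z * (a y * ker p y z) := by
        rw [lintegral_lintegral_swap]
        apply Measurable.aemeasurable
        exact (hφ.comp measurable_fst).mul ((ha.comp measurable_snd).mul (measurable_ker' p))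
    _ = ∫⁻ y in Q, a y * ∫⁻ z, φ z * ker p y z := by
        refine setLIntegral_congr_fun hQ (fun y _ => ?_)
        rw [← lintegral_const_mul _ (f := fun z => φ z * ker p y z) (hφ.mul (measurable_ker_left p y))]
        refine lintegral_congr fun z => ?_
        ring

lemma cauchy_schwarz {μ : Measure (EuclideanSpace ℝ (Fin n))}
    {a G : EuclideanSpace ℝ (Fin n) → ℝ≥0∞} (ha : Measurable a) (hG : Measurable G) :
    ∫⁻ y, a y * G y ∂μ
      ≤ (∫⁻ y, a y ∂μ) ^ ((1:ℝ)/2) * (∫⁻ y, a y * G y ^ 2 ∂μ) ^ ((1:ℝ)/2) := by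
  have hconj : Real.HolderConjugate 2 2 := Real.HolderConjugate.two_two
  have h := ENNReal.lintegral_mul_le_Lp_mul_Lq μ hconj
    (f := fun y => a y ^ ((1:ℝ)/2)) (g := fun y => a y ^ ((1:ℝ)/2) * G y)
    (ha.pow_const _).aemeasurable ((ha.pow_const _).mul hG).aemeasurable
  have e1 : ∀ y, (fun y => a y ^ ((1:ℝ)/2)) y * (fun y => a y ^ ((1:ℝ)/2) * G y) y
      = a y * G y := by
    intro y
    rw [← mul_assoc, ← ENNReal.rpow_add_of_nonneg _ _ (by norm_num) (by norm_num)]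
    norm_num
  have e2 : ∀ y, (a y ^ ((1:ℝ)/2)) ^ (2:ℝ) = a y := by
    intro y
    rw [← ENNReal.rpow_mul]
    norm_num
  have e3 : ∀ y, (a y ^ ((1:ℝ)/2) * G y) ^ (2:ℝ) = a y * G y ^ 2 := by
    intro y
    rw [ENNReal.mul_rpow_of_nonneg _ _ (by norm_num : (0:ℝ) ≤ 2), e2 y,
      show (2:ℝ) = ((2:ℕ):ℝ) from by norm_num, ENNReal.rpow_natCast]
  calc ∫⁻ y, a y * G y ∂μ
      = ∫⁻ y, (fun y => a y ^ ((1:ℝ)/2)) y * (fun y => a y ^ ((1:ℝ)/2) * G y) y ∂μ :=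
        (lintegral_congr e1).symm
    _ ≤ (∫⁻ y, (a y ^ ((1:ℝ)/2)) ^ (2:ℝ) ∂μ) ^ ((1:ℝ)/2) *
          (∫⁻ y, (a y ^ ((1:ℝ)/2) * G y) ^ (2:ℝ) ∂μ) ^ ((1:ℝ)/2) := h
    _ = (∫⁻ y, a y ∂μ) ^ ((1:ℝ)/2) * (∫⁻ y, a y * G y ^ 2 ∂μ) ^ ((1:ℝ)/2) := by
        rw [lintegral_congr e2, lintegral_congr e3]

/-- The key truncation argument: testing the `L² → L²(w)` bound. -/
lemma key_trunc {w : EuclideanSpace ℝ (Fin n) → ℝ} (hwmeas : Measurable w) (hw : ∀ x, 0 ≤ w x)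
    {Q : Set (EuclideanSpace ℝ (Fin n))} (hQ : MeasurableSet Q) (p : ℝ) (Cw : ℝ)
    (hb : ∀ f : EuclideanSpace ℝ (Fin n) → ℝ, Measurable f →
      ∫⁻ x, (∫⁻ y, ENNReal.ofReal (|f y| / ‖x - y‖ ^ p)) ^ 2 * ENNReal.ofReal (w x)
        ≤ ENNReal.ofReal Cw ^ 2 * ∫⁻ x, ENNReal.ofReal (f x ^ 2)) :
    ∫⁻ z, (∫⁻ y in Q, ENNReal.ofReal (w y) * ker p y z) ^ 2
      ≤ ENNReal.ofReal Cw ^ 2 * ∫⁻ y in Q, ENNReal.ofReal (w y) := by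
  have ha : Measurable fun x : E => ENNReal.ofReal (w x) := hwmeas.ennreal_ofReal
  set a : E → ℝ≥0∞ := fun x => ENNReal.ofReal (w x) with ha_def
  set Fq : E → ℝ≥0∞ := fun z => ∫⁻ y in Q, a y * ker p y z with hFq_def
  have hFqm : Measurable Fq := measurable_F ha Q p
  set W : ℝ≥0∞ := ∫⁻ y in Q, a y with hW_def
  set φ : ℕ → E → ℝ≥0∞ :=
    fun N => (closedBall (0:E) N).indicator (fun z => min (Fq z) N) with hφ_def
  have hφm : ∀ N, Measurable (φ N) := fun N =>
    (hFqm.min measurable_const).indicator measurableSet_closedBall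
  have hφle : ∀ N z, φ N z ≤ Fq z := by
    intro N z
    by_cases hz : z ∈ closedBall (0:E) N
    · simp only [hφ_def]; rw [Set.indicator_of_mem hz]; exact min_le_left _ _
    · simp only [hφ_def]; rw [Set.indicator_of_notMem hz]; exact zero_le
  have hφN : ∀ N z, φ N z ≤ N := by
    intro N z
    by_cases hz : z ∈ closedBall (0:E) N
    · simp only [hφ_def]; rw [Set.indicator_of_mem hz]; exact min_le_right _ _
    · simp only [hφ_def]; rw [Set.indicator_of_notMem hz]; exact zero_le
  have hφtop : ∀ N z, φ N z ≠ ∞ := fun N z =>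
    ((hφN N z).trans_lt (ENNReal.natCast_lt_top N)).ne
  have hmono : ∀ z, Monotone fun N : ℕ => φ N z := by
    intro z N M hNM
    by_cases hz : z ∈ closedBall (0:E) N
    · have hz' : z ∈ closedBall (0:E) M :=
        closedBall_subset_closedBall (by exact_mod_cast hNM) hz
      simp only [hφ_def]
      rw [Set.indicator_of_mem hz, Set.indicator_of_mem hz']
      exact min_le_min le_rfl (by exact_mod_cast hNM)
    · simp only [hφ_def]; rw [Set.indicator_of_notMem hz]; exact zero_le
  have hsup : ∀ z, (⨆ N, φ N z) = Fq z := by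
    intro z
    refine le_antisymm (iSup_le fun N => hφle N z) ?_
    obtain ⟨N₀, hN₀⟩ := exists_nat_ge ‖z‖
    have hmem : ∀ K : ℕ, z ∈ closedBall (0:E) ((N₀ + K : ℕ) : ℝ) := by
      intro K
      rw [mem_closedBall, dist_zero_right]
      calc ‖z‖ ≤ N₀ := hN₀
        _ ≤ ((N₀ + K : ℕ) : ℝ) := by exact_mod_cast Nat.le_add_right N₀ K
    have hK : ∀ K : ℕ, min (Fq z) K ≤ ⨆ N, φ N z := by
      intro K
      calc min (Fq z) K ≤ min (Fq z) ((N₀ + K : ℕ)) := by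
            exact min_le_min le_rfl (by exact_mod_cast Nat.le_add_left K N₀)
        _ = φ (N₀ + K) z := by
              simp only [hφ_def]; rw [Set.indicator_of_mem (hmem K)]
        _ ≤ ⨆ N, φ N z := le_iSup (fun N => φ N z) (N₀ + K)
    by_cases hF : Fq z = ∞
    · have : ∀ K : ℕ, (K : ℝ≥0∞) ≤ ⨆ N, φ N z := by
        intro K
        have := hK K
        rwa [hF, min_eq_right le_top] at this
      calc Fq z = ⨆ K : ℕ, (K : ℝ≥0∞) := by rw [hF, ENNReal.iSup_natCast]
        _ ≤ ⨆ N, φ N z := iSup_le this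
    · obtain ⟨K, hKgt⟩ := ENNReal.exists_nat_gt hF
      have := hK K
      rwa [min_eq_left hKgt.le] at this
  -- per-truncation bound
  have hA : ∀ N : ℕ, ∫⁻ z, φ N z ^ 2 ≤ ENNReal.ofReal Cw ^ 2 * W := by
    intro N
    set f : E → ℝ := fun z => (φ N z).toReal with hf_def
    have hfm : Measurable f := ENNReal.measurable_toReal.comp (hφm N)
    have hf0 : ∀ z, 0 ≤ f z := fun z => ENNReal.toReal_nonneg
    have hof : ∀ z, ENNReal.ofReal (|f z|) = φ N z := by
      intro z
      rw [abs_of_nonneg (hf0 z), hf_def, ENNReal.ofReal_toReal (hφtop N z)]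
    have hof2 : ∀ z, ENNReal.ofReal (f z ^ 2) = φ N z ^ 2 := by
      intro z
      rw [ENNReal.ofReal_pow (hf0 z)]
      congr 1
      rw [hf_def, ENNReal.ofReal_toReal (hφtop N z)]
    set A : ℝ≥0∞ := ∫⁻ z, φ N z ^ 2 with hA_def
    have hAfin : A ≠ ∞ := by
      have hb1 : ∀ z, φ N z ^ 2 ≤ (closedBall (0:E) N).indicator
          (fun _ => ((N:ℝ≥0∞)) ^ 2) z := by
        intro z
        by_cases hz : z ∈ closedBall (0:E) N
        · rw [Set.indicator_of_mem hz]
          exact pow_le_pow_left' (hφN N z) 2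
        · simp only [hφ_def, Set.indicator_of_notMem hz]
          simp
      have : A ≤ ((N:ℝ≥0∞)) ^ 2 * volume (closedBall (0:E) N) := by
        calc A ≤ ∫⁻ z, (closedBall (0:E) N).indicator (fun _ => ((N:ℝ≥0∞)) ^ 2) z :=
              lintegral_mono hb1
          _ = ((N:ℝ≥0∞)) ^ 2 * volume (closedBall (0:E) N) := by
              rw [lintegral_indicator_const measurableSet_closedBall]
      exact (this.trans_lt (ENNReal.mul_lt_top (ENNReal.pow_lt_top (ENNReal.natCast_lt_top N)) measure_closedBall_lt_top)).ne
    set G : E → ℝ≥0∞ := fun x => ∫⁻ y, ENNReal.ofReal (|f y| / ‖x - y‖ ^ p) with hG_def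
    have hGm : Measurable G := by
      apply Measurable.lintegral_prod_right
        (f := fun (x : E) (y : E) => ENNReal.ofReal (|f y| / ‖x - y‖ ^ p))
      exact (((hfm.comp measurable_snd).abs).div
        ((measurable_fst.sub measurable_snd).norm.pow_const p)).ennreal_ofReal
    have hGk : ∀ x, G x = ∫⁻ z, φ N z * ker p x z := by
      intro x
      refine lintegral_congr fun z => ?_
      show ENNReal.ofReal (|f z| / ‖x - z‖ ^ p) = _
      rw [div_eq_mul_one_div, ENNReal.ofReal_mul (abs_nonneg _), hof]
      rfl
    have step1 : A ≤ ∫⁻ z, φ N z * Fq z := by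
      refine lintegral_mono fun z => ?_
      rw [sq]
      exact mul_le_mul_right (hφle N z) _
    have step2 : ∫⁻ z, φ N z * Fq z = ∫⁻ y in Q, a y * G y := by
      rw [hFq_def]
      rw [swap_phiF ha (hφm N) hQ p]
      refine setLIntegral_congr_fun hQ (fun y _ => ?_)
      rw [hGk y]
    have step3 : ∫⁻ y in Q, a y * G y
        ≤ W ^ ((1:ℝ)/2) * (∫⁻ y in Q, a y * G y ^ 2) ^ ((1:ℝ)/2) :=
      cauchy_schwarz ha hGm
    have step4 : ∫⁻ y in Q, a y * G y ^ 2 ≤ ∫⁻ x, G x ^ 2 * a x := by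
      calc ∫⁻ y in Q, a y * G y ^ 2 = ∫⁻ y in Q, G y ^ 2 * a y := by
            refine lintegral_congr fun y => mul_comm _ _
        _ ≤ ∫⁻ y, G y ^ 2 * a y := setLIntegral_le_lintegral _ _
    have step5 : ∫⁻ x, G x ^ 2 * a x ≤ ENNReal.ofReal Cw ^ 2 * A := by
      have := hb f hfm
      rw [lintegral_congr hof2] at this
      exact this
    -- combine
    have main : A ≤ W ^ ((1:ℝ)/2) * (ENNReal.ofReal Cw * A ^ ((1:ℝ)/2)) := by
      have h5 : (∫⁻ y in Q, a y * G y ^ 2) ^ ((1:ℝ)/2)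
          ≤ (ENNReal.ofReal Cw ^ 2 * A) ^ ((1:ℝ)/2) :=
        ENNReal.rpow_le_rpow (step4.trans step5) (by norm_num)
      have hsplit : (ENNReal.ofReal Cw ^ 2 * A) ^ ((1:ℝ)/2)
          = ENNReal.ofReal Cw * A ^ ((1:ℝ)/2) := by
        rw [ENNReal.mul_rpow_of_nonneg _ _ (by norm_num : (0:ℝ) ≤ 1/2)]
        congr 1
        rw [← ENNReal.rpow_natCast (ENNReal.ofReal Cw) 2, ← ENNReal.rpow_mul]
        norm_num
      calc A ≤ ∫⁻ z, φ N z * Fq z := step1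
        _ = ∫⁻ y in Q, a y * G y := step2
        _ ≤ W ^ ((1:ℝ)/2) * (∫⁻ y in Q, a y * G y ^ 2) ^ ((1:ℝ)/2) := step3
        _ ≤ W ^ ((1:ℝ)/2) * (ENNReal.ofReal Cw ^ 2 * A) ^ ((1:ℝ)/2) :=
            mul_le_mul_right h5 _
        _ = W ^ ((1:ℝ)/2) * (ENNReal.ofReal Cw * A ^ ((1:ℝ)/2)) := by rw [hsplit]
    by_cases hA0 : A = 0
    · rw [hA0]; exact zero_le
    have hhalf : ∀ x : ℝ≥0∞, x ^ ((1:ℝ)/2) * x ^ ((1:ℝ)/2) = x := by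
      intro x
      rw [← ENNReal.rpow_add_of_nonneg _ _ (by norm_num) (by norm_num)]
      norm_num
    have hcancel : A ^ ((1:ℝ)/2) ≤ W ^ ((1:ℝ)/2) * ENNReal.ofReal Cw := by
      have hne0 : A ^ ((1:ℝ)/2) ≠ 0 := by
        simp only [ne_eq, ENNReal.rpow_eq_zero_iff, not_or]
        constructor
        · rintro ⟨h, _⟩; exact hA0 h
        · rintro ⟨h, _⟩; exact hAfin h
      have hnetop : A ^ ((1:ℝ)/2) ≠ ∞ := by
        simp only [ne_eq, ENNReal.rpow_eq_top_iff, not_or]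
        constructor
        · rintro ⟨h, _⟩; exact hA0 h
        · rintro ⟨h, _⟩; exact hAfin h
      rw [← ENNReal.mul_le_mul_iff_left hne0 hnetop]
      calc A ^ ((1:ℝ)/2) * A ^ ((1:ℝ)/2) = A := hhalf A
        _ ≤ W ^ ((1:ℝ)/2) * (ENNReal.ofReal Cw * A ^ ((1:ℝ)/2)) := main
        _ = W ^ ((1:ℝ)/2) * ENNReal.ofReal Cw * A ^ ((1:ℝ)/2) := by ring
    calc A = A ^ ((1:ℝ)/2) * A ^ ((1:ℝ)/2) := (hhalf A).symm
      _ ≤ (W ^ ((1:ℝ)/2) * ENNReal.ofReal Cw) * (W ^ ((1:ℝ)/2) * ENNReal.ofReal Cw) :=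
          mul_le_mul' hcancel hcancel
      _ = ENNReal.ofReal Cw ^ 2 * (W ^ ((1:ℝ)/2) * W ^ ((1:ℝ)/2)) := by ring
      _ = ENNReal.ofReal Cw ^ 2 * W := by rw [hhalf W]
  -- monotone convergence
  have hptsup : ∀ z, Fq z ^ 2 = ⨆ N, φ N z ^ 2 := by
    intro z
    rw [← hsup z]
    refine le_antisymm ?_ (iSup_le fun N => pow_le_pow_left' (le_iSup (fun N => φ N z) N) 2)
    rw [sq, ENNReal.iSup_mul]
    refine iSup_le fun N => ?_
    rw [ENNReal.mul_iSup]
    refine iSup_le fun M => ?_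
    calc φ N z * φ M z ≤ φ (max N M) z * φ (max N M) z :=
          mul_le_mul' (hmono z (le_max_left N M)) (hmono z (le_max_right N M))
      _ = φ (max N M) z ^ 2 := (sq _).symm
      _ ≤ ⨆ K, φ K z ^ 2 := le_iSup (fun K => φ K z ^ 2) (max N M)
  calc ∫⁻ z, Fq z ^ 2 = ∫⁻ z, ⨆ N, φ N z ^ 2 := lintegral_congr hptsup
    _ = ⨆ N, ∫⁻ z, φ N z ^ 2 :=
        lintegral_iSup (fun N => (hφm N).pow_const 2)
          (fun N M hNM z => pow_le_pow_left' (hmono z hNM) 2)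
    _ ≤ ENNReal.ofReal Cw ^ 2 * W := iSup_le hA

end KS

open KS in
/-- **Kerman–Sawyer lemma, necessity.**  If the fractional integral `I_{α/2}` is bounded
from `L²(dx)` to `L²(w dx)` (stated in the squared form
`∫ |I_{α/2}f|² w ≤ C_w² ∫ |f|²` for all measurable `f`), then `‖w‖_α < ∞`. -/
theorem kerman_sawyer_necessity (n : ℕ) (hn : 3 ≤ n) (α : ℝ) (hα : 0 < α) (hαn : α < n)
    (w : EuclideanSpace ℝ (Fin n) → ℝ) (hwmeas : Measurable w) (hw : ∀ x, 0 ≤ w x)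
    (hbdd : ∃ Cw : ℝ,
      ∀ f : EuclideanSpace ℝ (Fin n) → ℝ, Measurable f →
        ∫⁻ x, (∫⁻ y, ENNReal.ofReal (|f y| / ‖x - y‖ ^ ((n : ℝ) - α / 2))) ^ 2
            * ENNReal.ofReal (w x)
          ≤ ENNReal.ofReal Cw ^ 2 * ∫⁻ x, ENNReal.ofReal (f x ^ 2)) :
    ksNorm n α w < ⊤ := by
  classical
  obtain ⟨Cw, hCw⟩ := hbdd
  have hn0 : 0 < n := by omega
  set p : ℝ := (n:ℝ) - α/2 with hp_def
  have ha : Measurable fun x : EuclideanSpace ℝ (Fin n) => ENNReal.ofReal (w x) :=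
    hwmeas.ennreal_ofReal
  set a : EuclideanSpace ℝ (Fin n) → ℝ≥0∞ := fun x => ENNReal.ofReal (w x) with ha_def
  set c₀ : ℝ≥0∞ := ENNReal.ofReal ((2:ℝ) ^ (-p)) *
    volume (ball (0 : EuclideanSpace ℝ (Fin n)) 1) with hc₀_def
  have hc₀0 : c₀ ≠ 0 := by
    apply mul_ne_zero
    · simp only [ne_eq, ENNReal.ofReal_eq_zero, not_le]
      positivity
    · exact (measure_ball_pos volume _ one_pos).ne'
  have hc₀top : c₀ ≠ ∞ :=
    (ENNReal.mul_lt_top ENNReal.ofReal_lt_top measure_ball_lt_top).ne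
  have hbound : ∀ (k : ℤ) (m : Fin n → ℤ),
      (∫⁻ x in dyadicCube n k m, ENNReal.ofReal (w x))⁻¹ *
        (∫⁻ x in dyadicCube n k m, ∫⁻ y in dyadicCube n k m,
          ENNReal.ofReal (w x * w y / ‖x - y‖ ^ ((n:ℝ) - α)))
        ≤ c₀⁻¹ * ENNReal.ofReal Cw ^ 2 := by
    intro k m
    set Q := dyadicCube n k m with hQ_def
    have hQ : MeasurableSet Q := measurableSet_dyadicCube k m
    set W : ℝ≥0∞ := ∫⁻ x in Q, a x with hW_def
    -- pointwise bound on the double integrand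
    have hpt : ∀ x y : EuclideanSpace ℝ (Fin n),
        ENNReal.ofReal (w x * w y / ‖x - y‖ ^ ((n:ℝ) - α))
          ≤ c₀⁻¹ * (a x * a y * ∫⁻ z, ker p x z * ker p y z) := by
      intro x y
      by_cases hxy : x = y
      · subst hxy
        have : ‖x - x‖ ^ ((n:ℝ) - α) = 0 := by
          rw [sub_self, norm_zero, Real.zero_rpow (by linarith : (n:ℝ) - α ≠ 0)]
        rw [this]
        simp
      · have hk := ker_lower hn0 hα hαn x y hxy
        have hsplit : w x * w y / ‖x - y‖ ^ ((n:ℝ) - α)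
            = w x * (w y * (1 / ‖x - y‖ ^ ((n:ℝ) - α))) := by ring
        rw [hsplit, ENNReal.ofReal_mul (hw x), ENNReal.ofReal_mul (hw y)]
        have ht : ENNReal.ofReal (1 / ‖x - y‖ ^ ((n:ℝ) - α))
            ≤ c₀⁻¹ * ∫⁻ z, ker p x z * ker p y z := by
          calc ENNReal.ofReal (1 / ‖x - y‖ ^ ((n:ℝ) - α))
              = c₀⁻¹ * (c₀ * ENNReal.ofReal (1 / ‖x - y‖ ^ ((n:ℝ) - α))) := by
                rw [← mul_assoc, ENNReal.inv_mul_cancel hc₀0 hc₀top, one_mul]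
            _ ≤ c₀⁻¹ * ∫⁻ z, ker p x z * ker p y z := by
                apply mul_le_mul_right
                calc c₀ * ENNReal.ofReal (1 / ‖x - y‖ ^ ((n:ℝ) - α))
                    = ENNReal.ofReal ((2:ℝ) ^ (-p)) *
                        volume (ball (0 : EuclideanSpace ℝ (Fin n)) 1) *
                        ENNReal.ofReal (1 / ‖x - y‖ ^ ((n:ℝ) - α)) := by rw [hc₀_def]
                  _ ≤ ∫⁻ z, ker p x z * ker p y z := hk
        calc a x * (a y * ENNReal.ofReal (1 / ‖x - y‖ ^ ((n:ℝ) - α)))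
            ≤ a x * (a y * (c₀⁻¹ * ∫⁻ z, ker p x z * ker p y z)) := by
              exact mul_le_mul_right (mul_le_mul_right ht _) _
          _ = c₀⁻¹ * (a x * a y * ∫⁻ z, ker p x z * ker p y z) := by ring
    have hKmeas : ∀ x : EuclideanSpace ℝ (Fin n),
        Measurable fun y => a x * a y * ∫⁻ z, ker p x z * ker p y z := by
      intro x
      apply Measurable.mul (measurable_const.mul ha)
      apply Measurable.lintegral_prod_right
        (f := fun (y : EuclideanSpace ℝ (Fin n)) (z : EuclideanSpace ℝ (Fin n)) =>
          ker p x z * ker p y z)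
      exact (measurable_kerSnd p x).mul (measurable_ker p)
    have hD : (∫⁻ x in Q, ∫⁻ y in Q,
          ENNReal.ofReal (w x * w y / ‖x - y‖ ^ ((n:ℝ) - α)))
        ≤ c₀⁻¹ * (ENNReal.ofReal Cw ^ 2 * W) := by
      calc ∫⁻ x in Q, ∫⁻ y in Q, ENNReal.ofReal (w x * w y / ‖x - y‖ ^ ((n:ℝ) - α))
          ≤ ∫⁻ x in Q, ∫⁻ y in Q, c₀⁻¹ * (a x * a y * ∫⁻ z, ker p x z * ker p y z) :=
            lintegral_mono fun x => lintegral_mono fun y => hpt x y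
        _ = c₀⁻¹ * ∫⁻ x in Q, ∫⁻ y in Q, a x * a y * ∫⁻ z, ker p x z * ker p y z := by
            rw [← lintegral_const_mul' _ _ (ENNReal.inv_ne_top.mpr hc₀0)]
            refine lintegral_congr fun x => ?_
            rw [← lintegral_const_mul' _ _ (ENNReal.inv_ne_top.mpr hc₀0)]
        _ = c₀⁻¹ * ∫⁻ z, (∫⁻ x in Q, a x * ker p x z) ^ 2 := by
            rw [tonelli_square ha hQ p]
        _ ≤ c₀⁻¹ * (ENNReal.ofReal Cw ^ 2 * W) := by
            apply mul_le_mul_right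
            have := key_trunc hwmeas hw hQ p Cw hCw
            exact this
    by_cases hWtop : W = ∞
    · have : W⁻¹ = 0 := by rw [hWtop]; simp
      rw [← hW_def] at *
      rw [this, zero_mul]
      exact zero_le
    · calc W⁻¹ * (∫⁻ x in Q, ∫⁻ y in Q,
            ENNReal.ofReal (w x * w y / ‖x - y‖ ^ ((n:ℝ) - α)))
          ≤ W⁻¹ * (c₀⁻¹ * (ENNReal.ofReal Cw ^ 2 * W)) := mul_le_mul_right hD _
        _ = (c₀⁻¹ * ENNReal.ofReal Cw ^ 2) * (W⁻¹ * W) := by ring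
        _ ≤ (c₀⁻¹ * ENNReal.ofReal Cw ^ 2) * 1 :=
            mul_le_mul_right (ENNReal.inv_mul_le_one W) _
        _ = c₀⁻¹ * ENNReal.ofReal Cw ^ 2 := mul_one _
  have hfin : c₀⁻¹ * ENNReal.ofReal Cw ^ 2 < ⊤ := by
    apply ENNReal.mul_lt_top
    · exact ENNReal.inv_lt_top.mpr (pos_iff_ne_zero.mpr hc₀0)
    · exact pow_lt_top ENNReal.ofReal_lt_top
  refine lt_of_le_of_lt ?_ hfin
  rw [ksNorm]
  exact iSup_le fun k => iSup_le fun m => hbound k m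

end
end

section
/- Let n ≥ 3 and 0 < α < n, and fix x₀ ∈ ℝⁿ. Then there exist constants C > 0 and r₀ > 0 (depending only on n and α) such that for all 0 < r < r₀, the characteristic function w = χ_{B(x₀,r)} of the ball B(x₀,r) satisfies ‖w‖_α := sup_Q (∫_Q w dx)^{-1} ∫_Q ∫_Q w(x)w(y)/|x−y|^{n−α} dx dy ≤ C r^α; in particular ‖χ_{B(x₀,r)}‖_α is bounded uniformly for all r < r₀. -/
open MeasureTheory Metric ENNReal Asymptotics

noncomputable section

private lemma enn_inv_mul_mul_le (a m : ℝ≥0∞) : a⁻¹ * (a * m) ≤ m := by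
  rcases eq_or_ne a 0 with rfl | h0
  · simp
  rcases eq_or_ne a ⊤ with rfl | ht
  · simp
  · rw [← mul_assoc, ENNReal.inv_mul_cancel h0 ht, one_mul]

private lemma measurable_rpow_norm (n : ℕ) (β : ℝ) :
    Measurable fun z : EuclideanSpace ℝ (Fin n) => ENNReal.ofReal (‖z‖ ^ β) :=
  (measurable_norm.pow measurable_const).ennreal_ofReal

/-- Finiteness of `∫_{B(0,2)} ‖z‖^β dz` for `-n < β < 0`. -/
private lemma lintegral_rpow_ball_two_lt_top (n : ℕ) (hn : 0 < n) {β : ℝ}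
    (hβ1 : -(n : ℝ) < β) (hβ2 : β < 0) :
    ∫⁻ z in ball (0 : EuclideanSpace ℝ (Fin n)) 2, ENNReal.ofReal (‖z‖ ^ β) < ⊤ := by
  haveI : Nonempty (Fin n) := ⟨⟨0, hn⟩⟩
  set V : ℝ≥0∞ := volume (ball (0 : EuclideanSpace ℝ (Fin n)) 1) with hV
  have hVlt : V < ⊤ := measure_ball_lt_top
  set q : ℝ≥0∞ := ENNReal.ofReal ((2:ℝ)⁻¹ ^ ((n:ℝ) + β)) with hq
  have hq1 : q < 1 := by
    rw [hq, ← ENNReal.ofReal_one]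
    exact (ENNReal.ofReal_lt_ofReal_iff one_pos).2
      (Real.rpow_lt_one (by norm_num) (by norm_num) (by linarith))
  set S : ℕ → Set (EuclideanSpace ℝ (Fin n)) :=
    fun k => ball 0 (2 * (2:ℝ)⁻¹ ^ k) \ ball 0 ((2:ℝ)⁻¹ ^ k) with hS
  have hsub : ball (0 : EuclideanSpace ℝ (Fin n)) 2 \ {0} ⊆ ⋃ k, S k := by
    rintro z ⟨hz2, hz0⟩
    have hzpos : 0 < ‖z‖ := norm_pos_iff.2 (by simpa using hz0)
    have hex : ∃ k : ℕ, (2:ℝ)⁻¹ ^ k ≤ ‖z‖ := by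
      obtain ⟨k, hk⟩ := exists_pow_lt_of_lt_one hzpos (by norm_num : (2:ℝ)⁻¹ < 1)
      exact ⟨k, hk.le⟩
    classical
    refine Set.mem_iUnion.2 ⟨Nat.find hex, ?_, ?_⟩
    · rw [mem_ball_zero_iff]
      rcases Nat.eq_zero_or_pos (Nat.find hex) with hk0 | hk0
      · rw [hk0, pow_zero, mul_one]
        exact mem_ball_zero_iff.1 hz2
      · obtain ⟨j, hj⟩ := Nat.exists_eq_succ_of_ne_zero hk0.ne'
        have hmin := Nat.find_min hex (by omega : j < Nat.find hex)
        push_neg at hmin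
        have hkeq : (2:ℝ) * (2:ℝ)⁻¹ ^ (j + 1) = (2:ℝ)⁻¹ ^ j := by
          rw [pow_succ]; ring
        rw [hj, hkeq]
        exact hmin
    · intro hmem
      exact absurd (Nat.find_spec hex) (not_le.2 (mem_ball_zero_iff.1 hmem))
  have hterm : ∀ k : ℕ, (∫⁻ z in S k, ENNReal.ofReal (‖z‖ ^ β))
      ≤ (ENNReal.ofReal ((2:ℝ) ^ n) * V) * q ^ k := by
    intro k
    have htpos : (0:ℝ) < (2:ℝ)⁻¹ ^ k := by positivity
    have hpoint : ∀ z ∈ S k, ENNReal.ofReal (‖z‖ ^ β)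
        ≤ ENNReal.ofReal (((2:ℝ)⁻¹ ^ k) ^ β) := by
      rintro z ⟨_, hz⟩
      have : (2:ℝ)⁻¹ ^ k ≤ ‖z‖ := not_lt.1 (fun h => hz (mem_ball_zero_iff.2 h))
      exact ENNReal.ofReal_le_ofReal (Real.rpow_le_rpow_of_nonpos htpos this hβ2.le)
    calc (∫⁻ z in S k, ENNReal.ofReal (‖z‖ ^ β))
        ≤ ∫⁻ _ in S k, ENNReal.ofReal (((2:ℝ)⁻¹ ^ k) ^ β) :=
          setLIntegral_mono measurable_const hpoint
      _ = ENNReal.ofReal (((2:ℝ)⁻¹ ^ k) ^ β) * volume (S k) := setLIntegral_const _ _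
      _ ≤ ENNReal.ofReal (((2:ℝ)⁻¹ ^ k) ^ β)
          * (ENNReal.ofReal ((2 * (2:ℝ)⁻¹ ^ k) ^ n) * V) := by
          gcongr
          calc volume (S k) ≤ volume (ball (0 : EuclideanSpace ℝ (Fin n)) (2 * (2:ℝ)⁻¹ ^ k)) :=
                measure_mono Set.diff_subset
            _ = _ := by
                rw [Measure.addHaar_ball volume _ (by positivity), finrank_euclideanSpace,
                  Fintype.card_fin]
      _ = (ENNReal.ofReal ((2:ℝ) ^ n) * V) * q ^ k := by
          have h2 : (0:ℝ) < (2:ℝ)⁻¹ := by norm_num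
          have e1 : (((2:ℝ)⁻¹ ^ ((n:ℝ) + β)) ^ k : ℝ) = ((2:ℝ)⁻¹ ^ k) ^ ((n:ℝ) + β) := by
            rw [← Real.rpow_natCast ((2:ℝ)⁻¹) k,
              ← Real.rpow_natCast ((2:ℝ)⁻¹ ^ ((n:ℝ) + β)) k, ← Real.rpow_mul h2.le,
              ← Real.rpow_mul h2.le, mul_comm]
          have hre : ((2:ℝ)⁻¹ ^ k) ^ β * ((2 * (2:ℝ)⁻¹ ^ k) ^ n)
              = (2:ℝ) ^ n * ((2:ℝ)⁻¹ ^ ((n:ℝ) + β)) ^ k := by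
            rw [mul_pow, e1, Real.rpow_add htpos, Real.rpow_natCast]
            ring
          rw [← mul_assoc, ← ENNReal.ofReal_mul (Real.rpow_nonneg htpos.le β), hre,
            ENNReal.ofReal_mul (by positivity), hq, ← ENNReal.ofReal_pow (by positivity)]
          ring
  calc (∫⁻ z in ball (0 : EuclideanSpace ℝ (Fin n)) 2, ENNReal.ofReal (‖z‖ ^ β))
      = ∫⁻ z in ball (0 : EuclideanSpace ℝ (Fin n)) 2 \ {0}, ENNReal.ofReal (‖z‖ ^ β) := by
        refine (setLIntegral_congr ?_).symm
        exact diff_ae_eq_self.2 (measure_mono_null Set.inter_subset_right (measure_singleton 0))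
    _ ≤ ∫⁻ z in ⋃ k, S k, ENNReal.ofReal (‖z‖ ^ β) := lintegral_mono_set hsub
    _ ≤ ∑' k, ∫⁻ z in S k, ENNReal.ofReal (‖z‖ ^ β) := lintegral_iUnion_le _ _
    _ ≤ ∑' k, (ENNReal.ofReal ((2:ℝ) ^ n) * V) * q ^ k := ENNReal.tsum_le_tsum hterm
    _ = (ENNReal.ofReal ((2:ℝ) ^ n) * V) * (1 - q)⁻¹ := by
        rw [ENNReal.tsum_mul_left, ENNReal.tsum_geometric]
    _ < ⊤ := by
        refine ENNReal.mul_lt_top (ENNReal.mul_lt_top ofReal_lt_top hVlt) ?_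
        rw [ENNReal.inv_lt_top]
        exact tsub_pos_of_lt hq1

/-- Scaling: `∫_{B(0,2r)} ‖z‖^β dz = r^{n} r^β ∫_{B(0,2)} ‖z‖^β dz`. -/
private lemma lintegral_rpow_ball_smul (n : ℕ) (β : ℝ) {r : ℝ} (hr : 0 < r) :
    ∫⁻ z in ball (0 : EuclideanSpace ℝ (Fin n)) (2 * r), ENNReal.ofReal (‖z‖ ^ β)
      = ENNReal.ofReal (r ^ n * r ^ β) *
        ∫⁻ z in ball (0 : EuclideanSpace ℝ (Fin n)) 2, ENNReal.ofReal (‖z‖ ^ β) := by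
  have hrn : (0:ℝ) < r ^ n := pow_pos hr n
  have hmg := measurable_rpow_norm n β
  set f : EuclideanSpace ℝ (Fin n) → ℝ≥0∞ :=
    (ball (0 : EuclideanSpace ℝ (Fin n)) (2 * r)).indicator
      (fun z => ENNReal.ofReal (‖z‖ ^ β)) with hf
  have hmf : Measurable f := hmg.indicator measurableSet_ball
  have key : ∫⁻ u, f (r • u) = ENNReal.ofReal ((r ^ n)⁻¹) * ∫⁻ z, f z := by
    have h1 : ∫⁻ z, f z ∂(Measure.map (r • ·) volume) = ∫⁻ u, f (r • u) :=
      lintegral_map hmf (measurable_const_smul r)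
    rw [← h1, Measure.map_addHaar_smul volume hr.ne', lintegral_smul_measure,
      finrank_euclideanSpace, Fintype.card_fin, abs_of_pos (inv_pos.2 hrn), smul_eq_mul]
  have hptw : ∀ u : EuclideanSpace ℝ (Fin n), f (r • u)
      = (ball (0 : EuclideanSpace ℝ (Fin n)) 2).indicator
          (fun u => ENNReal.ofReal (r ^ β) * ENNReal.ofReal (‖u‖ ^ β)) u := by
    intro u
    have hnorm : ‖r • u‖ = r * ‖u‖ := by
      rw [norm_smul, Real.norm_eq_abs, abs_of_pos hr]
    by_cases hu : u ∈ ball (0 : EuclideanSpace ℝ (Fin n)) 2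
    · have h1 : r • u ∈ ball (0 : EuclideanSpace ℝ (Fin n)) (2 * r) := by
        rw [mem_ball_zero_iff] at hu ⊢
        rw [hnorm, mul_comm 2 r]
        exact mul_lt_mul_of_pos_left hu hr
      rw [hf, Set.indicator_of_mem h1, Set.indicator_of_mem hu, hnorm,
        Real.mul_rpow hr.le (norm_nonneg _),
        ENNReal.ofReal_mul (Real.rpow_nonneg hr.le _)]
    · have h1 : r • u ∉ ball (0 : EuclideanSpace ℝ (Fin n)) (2 * r) := by
        rw [mem_ball_zero_iff] at hu ⊢
        rw [hnorm, mul_comm 2 r]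
        exact fun h => hu (lt_of_mul_lt_mul_left h hr.le)
      rw [hf, Set.indicator_of_notMem h1, Set.indicator_of_notMem hu]
  have key2 : ∫⁻ u, f (r • u)
      = ENNReal.ofReal (r ^ β) *
        ∫⁻ z in ball (0 : EuclideanSpace ℝ (Fin n)) 2, ENNReal.ofReal (‖z‖ ^ β) := by
    rw [lintegral_congr hptw, lintegral_indicator measurableSet_ball,
      lintegral_const_mul' _ _ ENNReal.ofReal_ne_top]
  have key3 : ENNReal.ofReal ((r ^ n)⁻¹) *
      (∫⁻ z in ball (0 : EuclideanSpace ℝ (Fin n)) (2 * r), ENNReal.ofReal (‖z‖ ^ β))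
      = ENNReal.ofReal (r ^ β) *
        ∫⁻ z in ball (0 : EuclideanSpace ℝ (Fin n)) 2, ENNReal.ofReal (‖z‖ ^ β) := by
    rw [← key2, key, hf, lintegral_indicator measurableSet_ball]
  calc (∫⁻ z in ball (0 : EuclideanSpace ℝ (Fin n)) (2 * r), ENNReal.ofReal (‖z‖ ^ β))
      = (ENNReal.ofReal (r ^ n) * ENNReal.ofReal ((r ^ n)⁻¹)) *
        ∫⁻ z in ball (0 : EuclideanSpace ℝ (Fin n)) (2 * r), ENNReal.ofReal (‖z‖ ^ β) := by
        rw [← ENNReal.ofReal_mul hrn.le, mul_inv_cancel₀ hrn.ne', ENNReal.ofReal_one, one_mul]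
    _ = ENNReal.ofReal (r ^ n) * (ENNReal.ofReal ((r ^ n)⁻¹) *
        ∫⁻ z in ball (0 : EuclideanSpace ℝ (Fin n)) (2 * r), ENNReal.ofReal (‖z‖ ^ β)) :=
        mul_assoc _ _ _
    _ = ENNReal.ofReal (r ^ n) * (ENNReal.ofReal (r ^ β) *
        ∫⁻ z in ball (0 : EuclideanSpace ℝ (Fin n)) 2, ENNReal.ofReal (‖z‖ ^ β)) := by
        rw [key3]
    _ = _ := by rw [← mul_assoc, ← ENNReal.ofReal_mul hrn.le]

/-- **Lemma 2 of the paper.**  There are constants `C > 0` and `r₀ > 0` (depending only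
on `n` and `α`) such that for every `x₀` and every `0 < r < r₀`, the characteristic
function `w = χ_{B(x₀,r)}` satisfies `‖w‖_α ≤ C rᵅ`; in particular `‖χ_{B(x₀,r)}‖_α`
is bounded uniformly for `r < r₀`. -/
theorem ksNorm_ball_indicator (n : ℕ) (hn : 3 ≤ n) (α : ℝ) (hα : 0 < α) (hαn : α < n) :
    ∃ C : ℝ, 0 < C ∧ ∃ r₀ : ℝ, 0 < r₀ ∧
      ∀ (x₀ : EuclideanSpace ℝ (Fin n)) (r : ℝ), 0 < r → r < r₀ →
        ksNorm n α ((ball x₀ r).indicator fun _ => (1 : ℝ))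
          ≤ ENNReal.ofReal (C * r ^ α) := by
  have hn0 : 0 < n := by omega
  haveI : Nonempty (Fin n) := ⟨⟨0, hn0⟩⟩
  set β : ℝ := α - n with hβ
  have hβ1 : -(n:ℝ) < β := by rw [hβ]; linarith
  have hβ2 : β < 0 := by rw [hβ]; linarith
  set I : ℝ≥0∞ := ∫⁻ z in ball (0 : EuclideanSpace ℝ (Fin n)) 2, ENNReal.ofReal (‖z‖ ^ β)
    with hI
  have hIlt : I < ⊤ := lintegral_rpow_ball_two_lt_top n hn0 hβ1 hβ2
  refine ⟨I.toReal + 1, by positivity, 1, one_pos, ?_⟩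
  intro x₀ r hr _
  set w : EuclideanSpace ℝ (Fin n) → ℝ := (ball x₀ r).indicator fun _ => (1:ℝ) with hw
  have hwmem : ∀ x, x ∈ ball x₀ r → w x = 1 := fun x hx => Set.indicator_of_mem hx _
  have hwnot : ∀ x, x ∉ ball x₀ r → w x = 0 := fun x hx => Set.indicator_of_notMem hx _
  set M : ℝ≥0∞ := ENNReal.ofReal (r ^ n * r ^ β) * I with hM
  have hMne : M ≠ ⊤ := ENNReal.mul_ne_top ENNReal.ofReal_ne_top hIlt.ne
  have hrnβ : r ^ n * r ^ β = r ^ α := by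
    rw [← Real.rpow_natCast r n, ← Real.rpow_add hr, hβ]
    ring_nf
  have hMle : M ≤ ENNReal.ofReal ((I.toReal + 1) * r ^ α) := by
    rw [hM, hrnβ]
    calc ENNReal.ofReal (r ^ α) * I
        ≤ ENNReal.ofReal (r ^ α) * ENNReal.ofReal (I.toReal + 1) := by
          gcongr
          calc I = ENNReal.ofReal I.toReal := (ENNReal.ofReal_toReal hIlt.ne).symm
            _ ≤ ENNReal.ofReal (I.toReal + 1) := ENNReal.ofReal_le_ofReal (by linarith)
      _ = ENNReal.ofReal ((I.toReal + 1) * r ^ α) := by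
          rw [← ENNReal.ofReal_mul (by positivity), mul_comm]
  rw [ksNorm]
  refine iSup_le fun k => iSup_le fun m => ?_
  set Q := dyadicCube n k m with hQ
  have hinner : ∀ x : EuclideanSpace ℝ (Fin n), x ∈ ball x₀ r →
      (∫⁻ y in Q, ENNReal.ofReal (w y * ‖x - y‖ ^ β)) ≤ M := by
    intro x hx
    have hsub2 : ball x₀ r ⊆ ball x (2 * r) := by
      intro y hy
      rw [mem_ball] at hx hy ⊢
      calc dist y x ≤ dist y x₀ + dist x₀ x := dist_triangle _ _ _
        _ < r + r := add_lt_add hy (by rw [dist_comm]; exact hx)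
        _ = 2 * r := by ring
    have hmp := Measure.measurePreserving_sub_left
      (volume : Measure (EuclideanSpace ℝ (Fin n))) x
    have hemb : MeasurableEmbedding (fun z : EuclideanSpace ℝ (Fin n) => x - z) :=
      (MeasurableEquiv.subLeft x).measurableEmbedding
    have hpre : (fun z : EuclideanSpace ℝ (Fin n) => x - z) ⁻¹' ball x (2 * r)
        = ball 0 (2 * r) := by
      ext z
      simp [mem_ball, dist_eq_norm]
    calc (∫⁻ y in Q, ENNReal.ofReal (w y * ‖x - y‖ ^ β))
        ≤ ∫⁻ y, ENNReal.ofReal (w y * ‖x - y‖ ^ β) := setLIntegral_le_lintegral _ _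
      _ = ∫⁻ y in ball x₀ r, ENNReal.ofReal (‖x - y‖ ^ β) := by
          rw [← lintegral_indicator measurableSet_ball]
          refine lintegral_congr fun y => ?_
          by_cases hy : y ∈ ball x₀ r
          · rw [Set.indicator_of_mem hy, hwmem y hy, one_mul]
          · rw [Set.indicator_of_notMem hy, hwnot y hy, zero_mul, ENNReal.ofReal_zero]
      _ ≤ ∫⁻ y in ball x (2 * r), ENNReal.ofReal (‖x - y‖ ^ β) := lintegral_mono_set hsub2
      _ = ∫⁻ z in ball (0 : EuclideanSpace ℝ (Fin n)) (2 * r), ENNReal.ofReal (‖z‖ ^ β) := by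
          rw [← hmp.setLIntegral_comp_preimage_emb hemb
            (fun y => ENNReal.ofReal (‖x - y‖ ^ β)) (ball x (2 * r)), hpre]
          refine setLIntegral_congr_fun measurableSet_ball ?_
          intro z _
          dsimp only
          rw [_root_.sub_sub_cancel]
      _ = M := by rw [lintegral_rpow_ball_smul n β hr, hM, hI]
  have hwnn : ∀ x, 0 ≤ w x := fun x => Set.indicator_nonneg (fun _ _ => zero_le_one) x
  have hrw : ∀ x y : EuclideanSpace ℝ (Fin n),
      ENNReal.ofReal (w x * w y / ‖x - y‖ ^ ((n:ℝ) - α))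
      = ENNReal.ofReal (w x) * ENNReal.ofReal (w y * ‖x - y‖ ^ β) := by
    intro x y
    rw [div_eq_mul_inv, ← Real.rpow_neg (norm_nonneg _), neg_sub, mul_assoc,
      ENNReal.ofReal_mul (hwnn x), ← hβ]
  have hD : (∫⁻ x in Q, ∫⁻ y in Q,
      ENNReal.ofReal (w x * w y / ‖x - y‖ ^ ((n:ℝ) - α)))
      ≤ (∫⁻ x in Q, ENNReal.ofReal (w x)) * M := by
    calc (∫⁻ x in Q, ∫⁻ y in Q, ENNReal.ofReal (w x * w y / ‖x - y‖ ^ ((n:ℝ) - α)))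
        = ∫⁻ x in Q, ENNReal.ofReal (w x) *
            ∫⁻ y in Q, ENNReal.ofReal (w y * ‖x - y‖ ^ β) := by
          refine lintegral_congr fun x => ?_
          rw [← lintegral_const_mul' _ _ ENNReal.ofReal_ne_top]
          exact lintegral_congr fun y => hrw x y
      _ ≤ ∫⁻ x in Q, ENNReal.ofReal (w x) * M := by
          refine lintegral_mono fun x => ?_
          by_cases hx : x ∈ ball x₀ r
          · exact mul_le_mul_right (hinner x hx) _
          · rw [hwnot x hx, ENNReal.ofReal_zero, zero_mul, zero_mul]
      _ = (∫⁻ x in Q, ENNReal.ofReal (w x)) * M := lintegral_mul_const' M _ hMne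
  calc (∫⁻ x in Q, ENNReal.ofReal (w x))⁻¹ * (∫⁻ x in Q, ∫⁻ y in Q,
      ENNReal.ofReal (w x * w y / ‖x - y‖ ^ ((n:ℝ) - α)))
      ≤ (∫⁻ x in Q, ENNReal.ofReal (w x))⁻¹ *
        ((∫⁻ x in Q, ENNReal.ofReal (w x)) * M) := mul_le_mul_right hD _
    _ ≤ M := enn_inv_mul_mul_le _ _
    _ ≤ ENNReal.ofReal ((I.toReal + 1) * r ^ α) := hMle

end
end

section
/- Let f be a nonnegative locally integrable function on a ball B(x₀, r₀) ⊂ ℝⁿ satisfying the doubling property: there is a constant C such that ∫_{B(x₀,2r)} f dx ≤ C ∫_{B(x₀,r)} f dx for all r with 2r < r₀. If f has a zero of infinite order at x₀, i.e. for every m > 0 one has ∫_{B(x₀,ε)} f dx = O(ε^m) as ε → 0, then f vanishes almost everywhere in B(x₀, r₀). -/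
open MeasureTheory Metric ENNReal Asymptotics

noncomputable section

/-- **Lemma 3 of the paper.**  If a nonnegative locally integrable function `f` on a
ball `B(x₀, r₀)` satisfies the doubling property
`∫_{B(x₀,2r)} f ≤ C ∫_{B(x₀,r)} f` for all `2r < r₀` and has a zero of infinite order at
`x₀` (i.e. `∫_{B(x₀,ε)} f = O(ε^m)` as `ε → 0⁺` for every `m > 0`), then `f` vanishes
almost everywhere in `B(x₀, r₀)`. -/
theorem doubling_infinite_order_zero (n : ℕ) (x₀ : EuclideanSpace ℝ (Fin n))
    (r₀ : ℝ) (hr₀ : 0 < r₀) (f : EuclideanSpace ℝ (Fin n) → ℝ)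
    (hf : ∀ x, 0 ≤ f x) (hint : IntegrableOn f (ball x₀ r₀))
    (C : ℝ)
    (hdoub : ∀ r : ℝ, 0 < r → 2 * r < r₀ →
      ∫ x in ball x₀ (2 * r), f x ≤ C * ∫ x in ball x₀ r, f x)
    (hzero : ∀ m : ℝ, 0 < m →
      (fun ε : ℝ => ∫ x in ball x₀ ε, f x) =O[nhdsWithin 0 (Set.Ioi 0)]
        fun ε : ℝ => ε ^ m) :
    ∀ᵐ x ∂(volume : Measure (EuclideanSpace ℝ (Fin n))), x ∈ ball x₀ r₀ → f x = 0 := by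
  set C' : ℝ := max C 1 with hC'def
  have hC'1 : (1:ℝ) ≤ C' := le_max_right _ _
  have hC'0 : (0:ℝ) < C' := lt_of_lt_of_le one_pos hC'1
  have hnonneg : ∀ s : ℝ, 0 ≤ ∫ x in ball x₀ s, f x := fun s =>
    setIntegral_nonneg measurableSet_ball fun x _ => hf x
  -- Step 1: the integral over any ball of radius `r < r₀` vanishes.
  have key : ∀ r : ℝ, 0 < r → r < r₀ → ∫ x in ball x₀ r, f x = 0 := by
    intro r hr hrr
    set m : ℝ := Real.logb 2 (2 * C') with hmdef
    have hm0 : 0 < m := Real.logb_pos one_lt_two (by linarith)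
    have h2m : (2:ℝ) ^ m = 2 * C' := Real.rpow_logb two_pos (by norm_num) (by linarith)
    obtain ⟨K, hK⟩ := (hzero m hm0).bound
    rw [eventually_nhdsWithin_iff, Metric.eventually_nhds_iff] at hK
    obtain ⟨δ, hδ, hKδ⟩ := hK
    -- iteration of the doubling inequality
    have hiter : ∀ k : ℕ, ∫ x in ball x₀ r, f x ≤ C' ^ k * ∫ x in ball x₀ (r / 2 ^ k), f x := by
      intro k
      induction k with
      | zero => simp
      | succ k ih =>
        have hs : 0 < r / 2 ^ (k+1) := by positivity
        have h2s : 2 * (r / 2 ^ (k+1)) = r / 2 ^ k := by ring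
        have h2s' : 2 * (r / 2 ^ (k+1)) < r₀ := by
          rw [h2s]
          calc r / 2 ^ k ≤ r := by
                apply div_le_self hr.le
                exact one_le_pow₀ one_le_two
            _ < r₀ := hrr
        have hd := hdoub _ hs h2s'
        rw [h2s] at hd
        calc ∫ x in ball x₀ r, f x ≤ C' ^ k * ∫ x in ball x₀ (r / 2 ^ k), f x := ih
          _ ≤ C' ^ k * (C' * ∫ x in ball x₀ (r / 2 ^ (k+1)), f x) := by
              apply mul_le_mul_of_nonneg_left _ (by positivity)
              calc ∫ x in ball x₀ (r / 2 ^ k), f x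
                  ≤ C * ∫ x in ball x₀ (r / 2 ^ (k+1)), f x := hd
                _ ≤ C' * ∫ x in ball x₀ (r / 2 ^ (k+1)), f x :=
                    mul_le_mul_of_nonneg_right (le_max_left _ _) (hnonneg _)
          _ = C' ^ (k+1) * ∫ x in ball x₀ (r / 2 ^ (k+1)), f x := by ring
    -- algebra
    have halg : ∀ k : ℕ, C' ^ k * (K * (r / 2 ^ k) ^ m) = K * r ^ m * (1/2 : ℝ) ^ k := by
      intro k
      have h1 : ((2:ℝ) ^ k) ^ m = (2 * C') ^ k := by
        rw [← Real.rpow_natCast (2:ℝ) k, ← Real.rpow_mul (by norm_num), mul_comm,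
          Real.rpow_mul (by norm_num), h2m, Real.rpow_natCast]
      rw [Real.div_rpow hr.le (by positivity), h1, mul_pow]
      have : ((2:ℝ) ^ k) ≠ 0 := by positivity
      field_simp
      rw [mul_assoc, ← mul_pow]; norm_num
    -- eventual bound
    have htend : Filter.Tendsto (fun k : ℕ => r / 2 ^ k) Filter.atTop (nhds 0) := by
      have : Filter.Tendsto (fun k : ℕ => r * (1/2 : ℝ) ^ k) Filter.atTop (nhds (r * 0)) :=
        (_root_.tendsto_pow_atTop_nhds_zero_of_lt_one (by norm_num) (by norm_num)).const_mul r
      simpa [div_eq_mul_inv, inv_pow, one_div] using this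
    have hbound : ∀ᶠ k : ℕ in Filter.atTop,
        ∫ x in ball x₀ r, f x ≤ K * r ^ m * (1/2 : ℝ) ^ k := by
      filter_upwards [htend.eventually (gt_mem_nhds hδ)] with k hk
      have hε : 0 < r / 2 ^ k := by positivity
      have hdist : dist (r / 2 ^ k) 0 < δ := by
        rw [Real.dist_eq, sub_zero, abs_of_pos hε]; exact hk
      have hb := hKδ hdist hε
      have hb' : ∫ x in ball x₀ (r / 2 ^ k), f x ≤ K * (r / 2 ^ k) ^ m := by
        calc ∫ x in ball x₀ (r / 2 ^ k), f x ≤ ‖∫ x in ball x₀ (r / 2 ^ k), f x‖ :=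
              le_abs_self _
          _ ≤ K * ‖(r / 2 ^ k) ^ m‖ := hb
          _ = K * (r / 2 ^ k) ^ m := by
              rw [Real.norm_eq_abs, abs_of_nonneg (Real.rpow_nonneg hε.le _)]
      calc ∫ x in ball x₀ r, f x ≤ C' ^ k * ∫ x in ball x₀ (r / 2 ^ k), f x := hiter k
        _ ≤ C' ^ k * (K * (r / 2 ^ k) ^ m) := mul_le_mul_of_nonneg_left hb' (by positivity)
        _ = K * r ^ m * (1/2 : ℝ) ^ k := halg k
    have hlim : Filter.Tendsto (fun k : ℕ => K * r ^ m * (1/2 : ℝ) ^ k) Filter.atTop (nhds 0) := by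
      have := (_root_.tendsto_pow_atTop_nhds_zero_of_lt_one (by norm_num : (0:ℝ) ≤ 1/2)
        (by norm_num : (1/2:ℝ) < 1)).const_mul (K * r ^ m)
      simpa using this
    have hle0 : ∫ x in ball x₀ r, f x ≤ 0 := ge_of_tendsto hlim hbound
    exact le_antisymm hle0 (hnonneg r)
  -- Step 2: a.e. vanishing on each smaller ball
  have hae : ∀ r : ℝ, 0 < r → r < r₀ →
      ∀ᵐ x ∂(volume : Measure (EuclideanSpace ℝ (Fin n))), x ∈ ball x₀ r → f x = 0 := by
    intro r hr hrr
    have hint' : IntegrableOn f (ball x₀ r) volume :=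
      hint.mono_set (ball_subset_ball hrr.le)
    have h0 : ∫ x in ball x₀ r, f x = 0 := key r hr hrr
    have hzero' : f =ᵐ[volume.restrict (ball x₀ r)] 0 :=
      (integral_eq_zero_iff_of_nonneg hf hint').mp h0
    exact (ae_restrict_iff' measurableSet_ball).mp hzero'
  -- Step 3: exhaust the ball
  have hseq : ∀ k : ℕ, ∀ᵐ x ∂(volume : Measure (EuclideanSpace ℝ (Fin n))),
      x ∈ ball x₀ (r₀ * (k+1) / (k+2)) → f x = 0 := by
    intro k
    apply hae
    · positivity
    · rw [div_lt_iff₀ (by positivity)]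
      nlinarith [hr₀]
  have hall := ae_all_iff.mpr hseq
  filter_upwards [hall] with x hx hxball
  rw [mem_ball] at hxball
  set d := dist x x₀ with hd
  have hd0 : 0 ≤ d := dist_nonneg
  obtain ⟨k, hk⟩ := exists_nat_gt ((2 * d - r₀) / (r₀ - d))
  have hk' : (k : ℝ) * (r₀ - d) > 2 * d - r₀ := by
    rw [div_lt_iff₀ (by linarith)] at hk
    linarith
  apply hx k
  rw [mem_ball, ← hd, lt_div_iff₀ (by positivity)]
  nlinarith
end
end
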